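/- Let X be the infinite star graph with segments I_n = [p,q_n] ≅ [0,1], and let (a_n) ⊂ (0,∞) be a bounded sequence with a_n → 0 and Σ a_n < ∞. Define the measure m := Σ_n a_n · (Lebesgue measure on I_n) and the intrinsic metric d_{Γ,m}(x,y) := sup{f(x) − f(y) : f ∈ F_loc ∩ C(X), |f'|² ≤ a_n a.e. on I_n for every n}. Then (X, d_{Γ,m}) is a compact metric space; in particular every d_{Γ,m}-bounded sequence has a d_{Γ,m}-convergent subsequence. -/
import Mathlib


open MeasureTheory

/-- Admissible function for the intrinsic metric on the star graph with measure
m = Σ a_n·(Lebesgue on I_n): f ∈ F_loc ∩ C(X) with segmentwise derivative g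
satisfying |f'|² ≤ a_n a.e. on the n-th segment (energy density Γ(f) ≤ m). -/
def StarAdmIntrinsic (a : ℕ → ℝ) (f g : ℕ → ℝ → ℝ) : Prop :=
  (∀ m n : ℕ, f m 0 = f n 0) ∧
  (∀ n, IntervalIntegrable (g n) volume 0 1) ∧
  (∀ n, ∀ᵐ t ∂(volume.restrict (Set.Icc (0:ℝ) 1)), (g n t) ^ 2 ≤ a n) ∧
  (∀ n, ∀ x ∈ Set.Icc (0:ℝ) 1, f n x = f n 0 + ∫ t in (0:ℝ)..x, g n t)

/-- Intrinsic metric d_{Γ,m} on the star graph (a point of the graph is a pair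
(n,s), segment index and coordinate; all points (n,0) are identified). -/
noncomputable def starDGm (a : ℕ → ℝ) (x y : ℕ × ℝ) : ℝ :=
  sSup {t : ℝ | ∃ f g, StarAdmIntrinsic a f g ∧ t = f x.1 x.2 - f y.1 y.2}

lemma seg_bound (a : ℕ → ℝ) {f g : ℕ → ℝ → ℝ} (h : StarAdmIntrinsic a f g)
    (n : ℕ) {s t : ℝ} (hs : s ∈ Set.Icc (0:ℝ) 1) (ht : t ∈ Set.Icc (0:ℝ) 1) :
    |f n s - f n t| ≤ Real.sqrt (a n) * |s - t| := by
  obtain ⟨h0, hint, hae, hftc⟩ := h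
  have hfs := hftc n s hs
  have hft := hftc n t ht
  have key : f n s - f n t = ∫ u in t..s, g n u := by
    rw [hfs, hft]
    rw [add_sub_add_left_eq_sub]
    exact intervalIntegral.integral_interval_sub_left
      ((hint n).mono_set (Set.uIcc_subset_uIcc Set.left_mem_uIcc (by simpa using hs)))
      ((hint n).mono_set (Set.uIcc_subset_uIcc Set.left_mem_uIcc (by simpa using ht)))
  rw [key]
  have hae' : ∀ᵐ x ∂(volume : Measure ℝ), x ∈ Set.uIoc t s → ‖g n x‖ ≤ Real.sqrt (a n) := by
    have := (ae_restrict_iff' (measurableSet_Icc)).mp (hae n)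
    filter_upwards [this] with x hx hxm
    have hxIcc : x ∈ Set.Icc (0:ℝ) 1 := by
      rcases Set.uIoc_subset_uIcc hxm with h1
      exact Set.uIcc_subset_Icc ht hs h1
    have := hx hxIcc
    have : |g n x| ≤ Real.sqrt (a n) := by
      have := Real.sqrt_le_sqrt this
      rwa [Real.sqrt_sq_eq_abs] at this
    simpa using this
  calc |∫ u in t..s, g n u| ≤ Real.sqrt (a n) * |s - t| := by
        simpa using intervalIntegral.norm_integral_le_of_norm_le_const_ae hae'

lemma starAdm_zero (a : ℕ → ℝ) (ha : ∀ n, 0 ≤ a n) :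
    StarAdmIntrinsic a (fun _ _ => 0) (fun _ _ => 0) :=
  ⟨fun _ _ => rfl, fun _ => intervalIntegrable_const,
   fun n => Filter.Eventually.of_forall fun _ => by simpa using ha n,
   fun _ _ _ => by simp⟩

lemma starDGm_le_two (a : ℕ → ℝ) {n m : ℕ} {s t : ℝ}
    (hs : s ∈ Set.Icc (0:ℝ) 1) (ht : t ∈ Set.Icc (0:ℝ) 1) :
    starDGm a (n, s) (m, t) ≤ Real.sqrt (a n) * s + Real.sqrt (a m) * t := by
  apply Real.sSup_le
  · rintro r ⟨f, g, hfg, rfl⟩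
    have h1 : |f n s - f n 0| ≤ Real.sqrt (a n) * s := by
      have := seg_bound a hfg n hs (Set.left_mem_Icc.mpr one_pos.le)
      simpa [abs_of_nonneg hs.1] using this
    have h2 : |f m t - f m 0| ≤ Real.sqrt (a m) * t := by
      have := seg_bound a hfg m ht (Set.left_mem_Icc.mpr one_pos.le)
      simpa [abs_of_nonneg ht.1] using this
    have heq : f n s - f m t = (f n s - f n 0) - (f m t - f m 0) := by
      rw [hfg.1 n m]; ring
    calc f n s - f m t ≤ |f n s - f n 0| + |f m t - f m 0| := by
          rw [heq]
          have u1 := le_abs_self (f n s - f n 0)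
          have u2 := neg_abs_le (f m t - f m 0)
          linarith
      _ ≤ _ := add_le_add h1 h2
  · exact add_nonneg (mul_nonneg (Real.sqrt_nonneg _) hs.1)
      (mul_nonneg (Real.sqrt_nonneg _) ht.1)

lemma starDGm_seg (a : ℕ → ℝ) (n : ℕ) {s t : ℝ}
    (hs : s ∈ Set.Icc (0:ℝ) 1) (ht : t ∈ Set.Icc (0:ℝ) 1) :
    starDGm a (n, s) (n, t) ≤ Real.sqrt (a n) * |s - t| := by
  apply Real.sSup_le
  · rintro r ⟨f, g, hfg, rfl⟩
    exact (le_abs_self _).trans (seg_bound a hfg n hs ht)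
  · exact mul_nonneg (Real.sqrt_nonneg _) (abs_nonneg _)

lemma starDGm_nonneg (a : ℕ → ℝ) (ha : ∀ n, 0 ≤ a n) {n m : ℕ} {s t : ℝ}
    (hs : s ∈ Set.Icc (0:ℝ) 1) (ht : t ∈ Set.Icc (0:ℝ) 1) :
    0 ≤ starDGm a (n, s) (m, t) := by
  apply le_csSup
  · refine ⟨Real.sqrt (a n) * s + Real.sqrt (a m) * t, ?_⟩
    rintro r ⟨f, g, hfg, rfl⟩
    have h1 : |f n s - f n 0| ≤ Real.sqrt (a n) * s := by
      simpa [abs_of_nonneg hs.1] using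
        seg_bound a hfg n hs (Set.left_mem_Icc.mpr one_pos.le)
    have h2 : |f m t - f m 0| ≤ Real.sqrt (a m) * t := by
      simpa [abs_of_nonneg ht.1] using
        seg_bound a hfg m ht (Set.left_mem_Icc.mpr one_pos.le)
    have heq : f n s - f m t = (f n s - f n 0) - (f m t - f m 0) := by
      rw [hfg.1 n m]; ring
    calc f n s - f m t ≤ |f n s - f n 0| + |f m t - f m 0| := by
          rw [heq]
          have u1 := le_abs_self (f n s - f n 0)
          have u2 := neg_abs_le (f m t - f m 0)
          linarith
      _ ≤ _ := add_le_add h1 h2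
  · exact ⟨_, _, starAdm_zero a ha, by simp⟩

/-- With a_n → 0, Σ a_n < ∞, the star graph with the intrinsic
metric d_{Γ,m} is compact: every sequence has a d_{Γ,m}-convergent subsequence. -/
theorem star_graph_intrinsic_compact
    (a : ℕ → ℝ) (hpos : ∀ n, 0 < a n) (hbdd : ∃ C : ℝ, ∀ n, a n ≤ C)
    (hlim : Filter.Tendsto a Filter.atTop (nhds 0)) (hsum : Summable a)
    (p : ℕ → {q : ℕ × ℝ // q.2 ∈ Set.Icc (0:ℝ) 1}) :
    ∃ (φ : ℕ → ℕ) (q : ℕ × ℝ), StrictMono φ ∧ q.2 ∈ Set.Icc (0:ℝ) 1 ∧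
      Filter.Tendsto (fun k => starDGm a ((p (φ k)) : ℕ × ℝ) q)
        Filter.atTop (nhds 0) := by
  set idx : ℕ → ℕ := fun k => ((p k : ℕ × ℝ)).1 with hidx
  set c : ℕ → ℝ := fun k => ((p k : ℕ × ℝ)).2 with hc
  have hcm : ∀ k, c k ∈ Set.Icc (0:ℝ) 1 := fun k => (p k).2
  have hane : ∀ n, (0:ℝ) ≤ a n := fun n => (hpos n).le
  by_cases h : ∃ n, {k | idx k = n}.Infinite
  · obtain ⟨n, hn⟩ := h
    set ψ : ℕ → ℕ := Nat.nth (fun k => idx k = n) with hψdef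
    have hψmono : StrictMono ψ := Nat.nth_strictMono hn
    have hψ : ∀ k, idx (ψ k) = n := fun k => Nat.nth_mem_of_infinite hn k
    obtain ⟨s, hsmem, φ', hφ'mono, hconv⟩ :=
      isCompact_Icc.tendsto_subseq (fun k => hcm (ψ k))
    refine ⟨ψ ∘ φ', (n, s), hψmono.comp hφ'mono, hsmem, ?_⟩
    have hrw : ∀ k, ((p ((ψ ∘ φ') k) : ℕ × ℝ)) = (n, c (ψ (φ' k))) := by
      intro k
      exact Prod.ext (hψ (φ' k)) rfl
    have hb : Filter.Tendsto (fun k => Real.sqrt (a n) * |c (ψ (φ' k)) - s|)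
        Filter.atTop (nhds 0) := by
      have h1 : Filter.Tendsto (fun k => |c (ψ (φ' k)) - s|) Filter.atTop (nhds 0) := by
        have := (hconv.sub_const s).abs
        simpa using this
      simpa using h1.const_mul (Real.sqrt (a n))
    apply squeeze_zero (fun k => ?_) (fun k => ?_) hb
    · rw [hrw k]; exact starDGm_nonneg a hane (hcm _) hsmem
    · rw [hrw k]; exact starDGm_seg a n (hcm _) hsmem
  · push_neg at h
    have hT : Filter.Tendsto idx Filter.atTop Filter.atTop := by
      have key : Filter.Tendsto idx Filter.cofinite Filter.atTop := by
        rw [Filter.tendsto_atTop]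
        intro N
        rw [Filter.eventually_cofinite]
        apply Set.Finite.subset (Set.Finite.biUnion (Set.finite_Iic N) (fun n _ => h n))
        intro k hk
        simp only [Set.mem_setOf_eq, not_le] at hk
        exact Set.mem_biUnion (Set.mem_Iic.mpr hk.le) rfl
      exact Nat.cofinite_eq_atTop ▸ key
    refine ⟨id, (0, 0), strictMono_id, by norm_num, ?_⟩
    have hb : Filter.Tendsto (fun k => Real.sqrt (a (idx k))) Filter.atTop (nhds 0) := by
      have := (hlim.comp hT).sqrt
      simpa using this
    apply squeeze_zero (fun k => ?_) (fun k => ?_) hb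
    · have : ((p (id k) : ℕ × ℝ)) = (idx k, c k) := rfl
      rw [this]; exact starDGm_nonneg a hane (hcm _) (by norm_num)
    · have heq : ((p (id k) : ℕ × ℝ)) = (idx k, c k) := rfl
      rw [heq]
      calc starDGm a (idx k, c k) (0, 0)
          ≤ Real.sqrt (a (idx k)) * c k + Real.sqrt (a 0) * 0 :=
            starDGm_le_two a (hcm k) (by norm_num)
        _ ≤ Real.sqrt (a (idx k)) := by
            have := mul_le_of_le_one_right (Real.sqrt_nonneg (a (idx k))) (hcm k).2
            linarith
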